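/- arXiv:2201.11495 — 3 statements merged into one kernel-verified Lean document; each statement's English description precedes it below -/
import Mathlib

section
/- For the recursive amplitude tree, each entry satisfies b_{l,j} = sqrt( sum over all k in {0,...,2^n-1} whose top l bits equal j of |a_k|^2 ). In other words, b_{l,j}^2 equals the total probability mass of all amplitudes a_k with k in the subtree rooted at (l,j). -/
/-- Each entry of the recursive amplitude tree equals the square root of the total
probability mass of the amplitudes in the subtree rooted at `(l, j)`: those basis
indices `k` whose top `l` bits (i.e. `k / 2^(n-l)`) equal `j`. -/
theorem stmt_2 (n : ℕ) (a : Fin (2 ^ n) → ℂ)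
    (b : ℕ → ℕ → ℝ)
    (hbase : ∀ k : Fin (2 ^ n), b n k.val = ‖a k‖)
    (hrec : ∀ l < n, ∀ j < 2 ^ l,
      b l j = Real.sqrt (b (l + 1) (2 * j) ^ 2 + b (l + 1) (2 * j + 1) ^ 2)) :
    ∀ l ≤ n, ∀ j < 2 ^ l,
      b l j = Real.sqrt (∑ k : Fin (2 ^ n),
        if k.val / 2 ^ (n - l) = j then ‖a k‖ ^ 2 else 0) := by
  suffices H : ∀ d l, l + d = n → ∀ j < 2 ^ l,
      b l j = Real.sqrt (∑ k : Fin (2 ^ n),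
        if k.val / 2 ^ (n - l) = j then ‖a k‖ ^ 2 else 0) by
    intro l hl j hj
    exact H (n - l) l (by omega) j hj
  intro d
  induction d with
  | zero =>
    intro l hl j hj
    obtain rfl : n = l := by omega
    have hsum : (∑ k : Fin (2 ^ n),
        if k.val / 2 ^ (n - n) = j then ‖a k‖ ^ 2 else 0)
        = ‖a ⟨j, hj⟩‖ ^ 2 :=
      calc (∑ k : Fin (2 ^ n),
            if k.val / 2 ^ (n - n) = j then ‖a k‖ ^ 2 else 0)
          = ∑ k : Fin (2 ^ n),
            if k = (⟨j, hj⟩ : Fin (2 ^ n)) then ‖a k‖ ^ 2 else 0 :=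
            Finset.sum_congr rfl (fun k _ => by simp [Fin.ext_iff])
        _ = _ := Fintype.sum_ite_eq' _ _
    rw [show b n j = ‖a ⟨j, hj⟩‖ from hbase ⟨j, hj⟩, hsum,
      Real.sqrt_sq (norm_nonneg _)]
  | succ d ih =>
    intro l hl j hj
    have hln : l < n := by omega
    have h2j : 2 * j < 2 ^ (l + 1) := by rw [pow_succ]; omega
    have h2j1 : 2 * j + 1 < 2 ^ (l + 1) := by rw [pow_succ]; omega
    have key : ∀ k : ℕ, (k / 2 ^ (n - l) = j) ↔
        (k / 2 ^ (n - (l + 1)) = 2 * j ∨ k / 2 ^ (n - (l + 1)) = 2 * j + 1) := by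
      intro k
      have h1 : n - l = (n - (l + 1)) + 1 := by omega
      rw [h1, pow_succ, ← Nat.div_div_eq_div_mul]
      omega
    set S0 := ∑ k : Fin (2 ^ n),
      if k.val / 2 ^ (n - (l + 1)) = 2 * j then ‖a k‖ ^ 2 else 0 with hS0
    set S1 := ∑ k : Fin (2 ^ n),
      if k.val / 2 ^ (n - (l + 1)) = 2 * j + 1 then ‖a k‖ ^ 2 else 0 with hS1
    have hS0nn : 0 ≤ S0 := Finset.sum_nonneg fun k _ => by positivity
    have hS1nn : 0 ≤ S1 := Finset.sum_nonneg fun k _ => by positivity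
    have e0 := ih (l + 1) (by omega) (2 * j) h2j
    have e1 := ih (l + 1) (by omega) (2 * j + 1) h2j1
    have hsum : (∑ k : Fin (2 ^ n),
        if k.val / 2 ^ (n - l) = j then ‖a k‖ ^ 2 else 0) = S0 + S1 := by
      rw [hS0, hS1, ← Finset.sum_add_distrib]
      apply Finset.sum_congr rfl
      intro k _
      simp only [key k.val]
      by_cases h0 : k.val / 2 ^ (n - (l + 1)) = 2 * j <;>
        by_cases h1 : k.val / 2 ^ (n - (l + 1)) = 2 * j + 1 <;>
        simp [h0, h1]
    rw [hrec l hln j hj, e0, e1, Real.sq_sqrt hS0nn, Real.sq_sqrt hS1nn, hsum]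
end

section
/- Fanout correctness on a binary tree: let T be a binary tree of qubits with L+1 layers, and consider the operator Fanout(T) given by applying, for l = 0,...,L−1, the layer of CNOTs from each node T_{l,j} to its two children T_{l+1,2j} and T_{l+1,2j+1}, and then repeating the same layers for l = 0,...,L−2. Restricted to states where all internal layers are |0⟩, Fanout(T) maps |z⟩_root |0⟩^{⊗2^L}_leaves to |z⟩_root |z⟩^{⊗2^L}_leaves for z ∈ {0,1}, and conversely maps |z⟩_root |z⟩^{⊗2^L}_leaves back to |z⟩_root |0⟩^{⊗2^L}_leaves. -/
/-- One layer of the fanout: CNOTs from every node of layer `l` to its two children in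
layer `l+1` (node `(l+1, c)` gets the value of its parent `(l, c/2)` added to it).
States are bit assignments `x l j : ZMod 2` to nodes `(l, j)` of a binary tree. -/
def fanoutLayer (l : ℕ) (x : ℕ → ℕ → ZMod 2) : ℕ → ℕ → ZMod 2 :=
  fun m j => if m = l + 1 then x m j + x l (j / 2) else x m j

/-- Apply the fanout layers `l = 0, 1, ..., k-1` in order. -/
def fanoutSweep : ℕ → (ℕ → ℕ → ZMod 2) → (ℕ → ℕ → ZMod 2)
  | 0, x => x
  | k + 1, x => fanoutLayer k (fanoutSweep k x)

/-- Fanout on an `(L+1)`-layer binary tree: apply the CNOT layers for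
`l = 0, ..., L-1`, then repeat the same layers for `l = 0, ..., L-2`. -/
def fanout (L : ℕ) (x : ℕ → ℕ → ZMod 2) : ℕ → ℕ → ZMod 2 :=
  fanoutSweep (L - 1) (fanoutSweep L x)

/-- A sweep of `k` layers only changes layers `1, ..., k`. -/
lemma fanoutSweep_untouched (k : ℕ) (x : ℕ → ℕ → ZMod 2) (m j : ℕ)
    (h : m = 0 ∨ k < m) : fanoutSweep k x m j = x m j := by
  induction k with
  | zero => rfl
  | succ k ih =>
      have hm : m ≠ k + 1 := by omega
      simp only [fanoutSweep, fanoutLayer, if_neg hm]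
      exact ih (by omega)

lemma fanoutSweep_succ_top (m : ℕ) (x : ℕ → ℕ → ZMod 2) (j : ℕ) :
    fanoutSweep (m + 1) x (m + 1) j = x (m + 1) j + fanoutSweep m x m (j / 2) := by
  simp only [fanoutSweep, fanoutLayer, if_pos]
  rw [fanoutSweep_untouched m x (m + 1) j (Or.inr (by omega))]

/-- On inputs with zero internal layers up to `m` and root `z`, the sweep of `m`
layers puts `z` on layer `m`. -/
lemma fanoutSweep_top (z : ZMod 2) (m : ℕ) (x : ℕ → ℕ → ZMod 2)
    (h0 : x 0 0 = z)
    (hz : ∀ l j, 1 ≤ l → l ≤ m → j < 2 ^ l → x l j = 0) :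
    ∀ j < 2 ^ m, fanoutSweep m x m j = z := by
  induction m with
  | zero =>
      intro j hj
      interval_cases j
      simpa [fanoutSweep] using h0
  | succ m ih =>
      intro j hj
      rw [fanoutSweep_succ_top, hz (m + 1) j (by omega) le_rfl hj,
        ih (fun l j h1 h2 h3 => hz l j h1 (by omega) h3) (j / 2)
          (Nat.div_lt_of_lt_mul (by rw [pow_succ] at hj; omega))]
      simp

/-- Fanout correctness on a binary tree with `L+1` layers (root at layer 0, `2^L`
leaves at layer `L`): restricted to inputs whose non-root layers are all `0`, fanout
maps `|z⟩_root |0⟩_leaves` to `|z⟩_root |z⟩_leaves`; conversely, on inputs with all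
internal layers `0` and all leaves equal to `z`, it maps
`|z⟩_root |z⟩_leaves` back to `|z⟩_root |0⟩_leaves`. -/
theorem stmt_15 (L : ℕ) (hL : 1 ≤ L) (z : ZMod 2) :
    (∀ x : ℕ → ℕ → ZMod 2, x 0 0 = z →
      (∀ l j, 1 ≤ l → l ≤ L → j < 2 ^ l → x l j = 0) →
      fanout L x 0 0 = z ∧ ∀ j < 2 ^ L, fanout L x L j = z) ∧
    (∀ x : ℕ → ℕ → ZMod 2, x 0 0 = z →
      (∀ l j, 1 ≤ l → l ≤ L - 1 → j < 2 ^ l → x l j = 0) →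
      (∀ j < 2 ^ L, x L j = z) →
      fanout L x 0 0 = z ∧ ∀ j < 2 ^ L, fanout L x L j = 0) := by
  constructor
  · intro x h0 hz
    constructor
    · rw [fanout, fanoutSweep_untouched _ _ _ _ (Or.inl rfl),
        fanoutSweep_untouched _ _ _ _ (Or.inl rfl)]
      exact h0
    · intro j hj
      rw [fanout, fanoutSweep_untouched _ _ _ _ (Or.inr (by omega))]
      exact fanoutSweep_top z L x h0 hz j hj
  · intro x h0 hz hleaf
    have key : ∀ j < 2 ^ L, fanoutSweep L x L j = 0 := by
      obtain ⟨M, rfl⟩ : ∃ M, L = M + 1 := ⟨L - 1, by omega⟩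
      intro j hj
      rw [fanoutSweep_succ_top, hleaf j hj,
        fanoutSweep_top z M x h0 (fun l j h1 h2 h3 => hz l j h1 (by omega) h3)
          (j / 2) (Nat.div_lt_of_lt_mul (by rw [pow_succ] at hj; omega))]
      simp [CharTwo.add_self_eq_zero]
    constructor
    · rw [fanout, fanoutSweep_untouched _ _ _ _ (Or.inl rfl),
        fanoutSweep_untouched _ _ _ _ (Or.inl rfl)]
      exact h0
    · intro j hj
      rw [fanout, fanoutSweep_untouched _ _ _ _ (Or.inr (by omega))]
      exact key j hj
end

section
/- Encoding via amplitude tree reproduces the target state: for a normalized a : Fin(2^n) → ℂ, write a_k = b_{n,k} e^{i φ_k} with b_{n,k} = |a_k|, define the tree b_{l,j} and angles θ_{l,j} = arccos(b_{l,2j}/b_{l−1,j}) (θ = 0 if b_{l−1,j}=0). Then for every k, |a_k| = ∏_{l=1}^{n} c_l(k), where c_l(k) = cos θ_{l, (k,l−1)} if bit k_{n−l+1} = 0 and c_l(k) = sin θ_{l, (k,l−1)} if k_{n−l+1} = 1, with (k,l−1) the integer formed by the top l−1 bits of k. -/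
/-- Encoding via the amplitude tree reproduces the target amplitudes: for a normalized
state `a`, with the recursive tree `b` and angles `θ l j = arccos (b l (2j) / b (l-1) j)`
(`θ = 0` on zero branches), each modulus `|a k|` is the telescoping product over levels
`l = 1, ..., n` of `cos (θ l (k,l-1))` or `sin (θ l (k,l-1))` according to whether the
bit `k_{n-l+1}` of `k` is `0` or `1`; here `(k,l-1) = ⌊k / 2^(n-l+1)⌋` is the top
`(l-1)`-bit prefix of `k` and bit `k_{n-l+1}` is `⌊k / 2^(n-l)⌋ % 2`. -/
theorem stmt_18 (n : ℕ) (a : Fin (2 ^ n) → ℂ)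
    (hnorm : ∑ k : Fin (2 ^ n), ‖a k‖ ^ 2 = 1)
    (b : ℕ → ℕ → ℝ)
    (hbase : ∀ k : Fin (2 ^ n), b n k.val = ‖a k‖)
    (hrec : ∀ l < n, ∀ j < 2 ^ l,
      b l j = Real.sqrt (b (l + 1) (2 * j) ^ 2 + b (l + 1) (2 * j + 1) ^ 2))
    (θ : ℕ → ℕ → ℝ)
    (hθ : ∀ l, 1 ≤ l → l ≤ n → ∀ j < 2 ^ (l - 1),
      θ l j = if b (l - 1) j = 0 then 0 else Real.arccos (b l (2 * j) / b (l - 1) j)) :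
    ∀ k : Fin (2 ^ n),
      ‖a k‖ = ∏ l ∈ Finset.Icc 1 n,
        (if (k.val / 2 ^ (n - l)) % 2 = 0 then Real.cos (θ l (k.val / 2 ^ (n - l + 1)))
          else Real.sin (θ l (k.val / 2 ^ (n - l + 1)))) := by
  have hbnn : ∀ l, l ≤ n → ∀ j, j < 2 ^ l → 0 ≤ b l j := by
    intro l hl j hj
    rcases eq_or_lt_of_le hl with h | h
    · subst h
      rw [show j = ((⟨j, hj⟩ : Fin (2 ^ l)) : Fin (2 ^ l)).val from rfl, hbase]
      exact norm_nonneg _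
    · rw [hrec l h j hj]; exact Real.sqrt_nonneg _
  -- key one-level splitting
  have key : ∀ l, l < n → ∀ i, i < 2 ^ (l + 1) →
      b (l + 1) i = b l (i / 2) * (if i % 2 = 0 then Real.cos (θ (l + 1) (i / 2))
        else Real.sin (θ (l + 1) (i / 2))) := by
    intro l hl i hi
    set j := i / 2 with hjdef
    have hjlt : j < 2 ^ l := by
      have : i < 2 ^ l * 2 := by rwa [pow_succ] at hi
      exact Nat.div_lt_of_lt_mul (by omega)
    have h2j : 2 * j < 2 ^ (l + 1) := by rw [pow_succ]; omega
    have h2j1 : 2 * j + 1 < 2 ^ (l + 1) := by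
      have hb : i = 2 * j + i % 2 := by rw [hjdef]; omega
      have := Nat.mod_two_eq_zero_or_one i
      rw [pow_succ]; omega
    have hx := hbnn (l + 1) hl (2 * j) h2j
    have hy := hbnn (l + 1) hl (2 * j + 1) h2j1
    set x := b (l + 1) (2 * j)
    set y := b (l + 1) (2 * j + 1)
    have hB : b l j = Real.sqrt (x ^ 2 + y ^ 2) := hrec l hl j hjlt
    have hθ' : θ (l + 1) j = if b l j = 0 then 0
        else Real.arccos (x / b l j) := by
      have := hθ (l + 1) (by omega) hl j (by simpa using hjlt)
      simpa using this
    have hie : i = 2 * j + i % 2 := by rw [hjdef]; omega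
    by_cases hB0 : b l j = 0
    · have hs : x ^ 2 + y ^ 2 = 0 := by
        have := Real.sqrt_eq_zero (by positivity) |>.mp (hB ▸ hB0)
        exact this
      have hx0 : x = 0 := by nlinarith
      have hy0 : y = 0 := by nlinarith
      rcases Nat.mod_two_eq_zero_or_one i with h | h
      · rw [hB0, zero_mul]
        rw [hie, h]; simpa using hx0
      · rw [hB0, zero_mul]
        rw [hie, h]; simpa using hy0
    · have hBpos : 0 < b l j := lt_of_le_of_ne (hB ▸ Real.sqrt_nonneg _) (Ne.symm hB0)
      have hBsq : b l j ^ 2 = x ^ 2 + y ^ 2 := by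
        rw [hB, Real.sq_sqrt (by positivity)]
      have hxle : x ≤ b l j := by nlinarith
      have hθeq : θ (l + 1) j = Real.arccos (x / b l j) := by rw [hθ', if_neg hB0]
      have hcos : Real.cos (θ (l + 1) j) = x / b l j := by
        rw [hθeq, Real.cos_arccos]
        · exact le_trans (by norm_num) (div_nonneg hx hBpos.le)
        · exact (div_le_one hBpos).mpr hxle
      have hsin : Real.sin (θ (l + 1) j) = y / b l j := by
        rw [hθeq, Real.sin_arccos]
        have : 1 - (x / b l j) ^ 2 = (y / b l j) ^ 2 := by
          field_simp
          nlinarith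
        rw [this, Real.sqrt_sq (div_nonneg hy hBpos.le)]
      rcases Nat.mod_two_eq_zero_or_one i with h | h
      · rw [hie, h]
        simp only [Nat.mul_add_mod, h, if_pos]
        rw [hcos]
        field_simp
        rfl
      · rw [hie, h]
        have : (2 * j + 1) % 2 = 1 := by omega
        rw [this]
        simp only [if_neg one_ne_zero]
        rw [hsin]
        field_simp
        rfl
  intro k
  -- telescoping
  have main : ∀ m, m ≤ n → ‖a k‖ =
      b (n - m) (k.val / 2 ^ m) * ∏ l ∈ Finset.Icc (n - m + 1) n,
        (if (k.val / 2 ^ (n - l)) % 2 = 0 then Real.cos (θ l (k.val / 2 ^ (n - l + 1)))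
          else Real.sin (θ l (k.val / 2 ^ (n - l + 1)))) := by
    intro m
    induction m with
    | zero =>
      intro _
      simp only [Nat.sub_zero, pow_zero, Nat.div_one]
      rw [Finset.Icc_eq_empty (by omega), Finset.prod_empty, mul_one, hbase]
    | succ m ih =>
      intro hm
      have hm' : m ≤ n := by omega
      rw [ih hm']
      set F : ℕ → ℝ := fun l =>
        (if (k.val / 2 ^ (n - l)) % 2 = 0 then Real.cos (θ l (k.val / 2 ^ (n - l + 1)))
          else Real.sin (θ l (k.val / 2 ^ (n - l + 1)))) with hF
      have hsplit : Finset.Icc (n - (m + 1) + 1) n =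
          insert (n - m) (Finset.Icc (n - m + 1) n) := by
        have h1 : n - (m + 1) + 1 = n - m := by omega
        rw [h1]
        ext x
        simp only [Finset.mem_insert, Finset.mem_Icc]
        omega
      rw [hsplit, Finset.prod_insert (by simp [Finset.mem_Icc])]
      have hkm : k.val / 2 ^ m < 2 ^ (n - m) := by
        have hk : k.val < 2 ^ n := k.isLt
        have : (2 : ℕ) ^ n = 2 ^ (n - m) * 2 ^ m := by
          rw [← pow_add]; congr 1; omega
        have h2 : (2:ℕ)^n = 2 ^ m * 2 ^ (n - m) := by rw [← pow_add]; congr 1; omega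
        exact Nat.div_lt_of_lt_mul (h2 ▸ hk)
      have hln : n - m - 1 < n := by omega
      have hsucc : n - m - 1 + 1 = n - m := by omega
      have hkey := key (n - m - 1) hln (k.val / 2 ^ m) (by rwa [hsucc])
      rw [hsucc] at hkey
      have hdiv : k.val / 2 ^ m / 2 = k.val / 2 ^ (m + 1) := by
        rw [Nat.div_div_eq_div_mul, pow_succ]
      rw [hdiv] at hkey
      have hFval : F (n - m) = (if (k.val / 2 ^ m) % 2 = 0
          then Real.cos (θ (n - m) (k.val / 2 ^ (m + 1)))
          else Real.sin (θ (n - m) (k.val / 2 ^ (m + 1)))) := by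
        rw [hF]
        have e1 : n - (n - m) = m := by omega
        have e2 : n - (n - m) + 1 = m + 1 := by omega
        simp only [e1, e2]
      rw [hkey]
      have e1 : n - (n - m) = m := by omega
      have e2 : n - (m + 1) = n - m - 1 := by omega
      simp only [hF, e1, e2]
      ring
  have hlast := main n le_rfl
  have hk0 : k.val / 2 ^ n = 0 := Nat.div_eq_of_lt k.isLt
  rw [Nat.sub_self, hk0] at hlast
  -- b 0 0 = 1
  have pair : ∀ (f : ℕ → ℝ) (m : ℕ), ∑ i ∈ Finset.range (2 * m), f i
      = ∑ i ∈ Finset.range m, (f (2 * i) + f (2 * i + 1)) := by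
    intro f m
    induction m with
    | zero => simp
    | succ m ih =>
      have h2 : 2 * (m + 1) = (2 * m + 1) + 1 := by ring
      rw [h2, Finset.sum_range_succ, Finset.sum_range_succ, ih,
        Finset.sum_range_succ]
      ring
  have hsum : ∀ d, d ≤ n → ∑ j ∈ Finset.range (2 ^ (n - d)), b (n - d) j ^ 2 = 1 := by
    intro d
    induction d with
    | zero =>
      intro _
      rw [Nat.sub_zero, ← Fin.sum_univ_eq_sum_range (fun j => b n j ^ 2)]
      rw [← hnorm]
      exact Finset.sum_congr rfl (fun i _ => by rw [hbase])
    | succ d ih =>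
      intro hd
      have hd' : d ≤ n := by omega
      have hln : n - d - 1 < n := by omega
      have hsucc : n - d - 1 + 1 = n - d := by omega
      have e : n - (d + 1) = n - d - 1 := by omega
      rw [e]
      have h2 : (2 : ℕ) ^ (n - d) = 2 * 2 ^ (n - d - 1) := by
        conv_lhs => rw [← hsucc]
        rw [pow_succ, mul_comm]
      rw [← ih hd', h2, pair]
      apply Finset.sum_congr rfl
      intro j hj
      rw [Finset.mem_range] at hj
      have := hrec (n - d - 1) hln j hj
      rw [hsucc] at this
      rw [this, Real.sq_sqrt (by positivity)]
  have hb00 : b 0 0 = 1 := by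
    have h1 := hsum n le_rfl
    rw [Nat.sub_self, pow_zero, Finset.sum_range_one] at h1
    have hnn := hbnn 0 (Nat.zero_le n) 0 (by norm_num)
    nlinarith [Real.sqrt_eq_one.mpr rfl]
  rw [hb00, one_mul] at hlast
  simpa using hlast
end
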